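/- Let k ≥ 2 be an even integer, n a positive integer, and let p_1, …, p_m be points in ℝ^n such that for all i ≠ j, |1 − ‖p_i − p_j‖_k^k| ≤ m^{−1/2}, where ‖x‖_k = (Σ_{t=1}^n |x_t|^k)^{1/k}. Then m ≤ 2((k−1)n + 2). -/

import Mathlib

/-!
The matrix `M i j = 1 - ‖p_i - p_j‖_k^k` is symmetric with unit diagonal and off-diagonal entries
of size at most `m^(-1/2)`. Writing `tr M` and `tr M²` through the eigenvalues and applying
Cauchy–Schwarz to the nonzero ones gives `m² = (tr M)² ≤ rank M · tr M² ≤ rank M · 2m`, so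
`rank M ≥ m / 2`. On the other hand, expanding `(x_t - y_t)^k` binomially writes `M` as a sum of
`(k - 1) n + 2` products of a function of the row and a function of the column, so
`rank M ≤ (k - 1) n + 2`.
-/

open Finset Matrix

theorem sub_pow_eq_add_sum_Ioo {R : Type*} [CommRing R] (a b : R) {k : ℕ} (hk : 0 < k) :
    (a - b) ^ k = a ^ k + (-b) ^ k + ∑ s ∈ Ioo 0 k, (k.choose s : R) * a ^ s * (-b) ^ (k - s) := by
  rw [sub_eq_add_neg, add_pow, Nat.range_succ_eq_Icc_zero, Icc_eq_cons_Ioc k.zero_le, sum_cons,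
    Ioc_eq_cons_Ioo hk, sum_cons]
  simp only [pow_zero, Nat.choose_zero_right, Nat.choose_self, Nat.sub_zero, Nat.sub_self]
  ring_nf

theorem Matrix.rank_le_card_of_eq_sum_mul {R m n ι : Type*} [CommRing R] [StrongRankCondition R]
    [Fintype n] [Fintype ι] {M : Matrix m n R} (g : m → ι → R) (h : ι → n → R)
    (hM : ∀ i j, M i j = ∑ l, g i l * h l j) :
    M.rank ≤ Fintype.card ι := by
  have hfactor : M = of g * of h := by
    ext i j
    simp [hM, mul_apply]
  rw [hfactor]
  exact (rank_mul_le_left _ _).trans (rank_le_card_width _)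

theorem rank_one_sub_sum_sub_pow_le {R m n : Type*} [CommRing R] [StrongRankCondition R]
    [Fintype m] [Fintype n] (P : m → n → R) {k : ℕ} (hk : 0 < k) :
    (of fun i j => 1 - ∑ t, (P i t - P j t) ^ k).rank ≤ Fintype.card n * (k - 1) + 2 := by
  let g : m → Unit ⊕ Unit ⊕ n × Ioo 0 k → R := fun i l => match l with
    | .inl _ => 1 - ∑ t, P i t ^ k
    | .inr (.inl _) => -1
    | .inr (.inr (t, s)) => -((k.choose s : R) * P i t ^ (s : ℕ))
  let h : Unit ⊕ Unit ⊕ n × Ioo 0 k → m → R := fun l j => match l with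
    | .inl _ => 1
    | .inr (.inl _) => ∑ t, (-P j t) ^ k
    | .inr (.inr (t, s)) => (-P j t) ^ (k - s)
  have hcard : Fintype.card (Unit ⊕ Unit ⊕ n × Ioo 0 k) = Fintype.card n * (k - 1) + 2 := by
    simp only [Fintype.card_sum, Fintype.card_unique, Fintype.card_prod, Fintype.card_coe,
      Nat.card_Ioo, tsub_zero]
    ring
  refine hcard ▸ rank_le_card_of_eq_sum_mul g h fun i j => ?_
  simp only [of_apply, Fintype.sum_sum_type, Fintype.sum_prod_type, g, h]
  simp only [sub_pow_eq_add_sum_Ioo _ _ hk, sum_add_distrib, ← sum_coe_sort (Ioo 0 k)]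
  simp only [univ_unique, sum_const, card_singleton, one_smul, mul_one, one_mul, neg_mul,
    sum_neg_distrib]
  ring

variable {ι : Type*} [Fintype ι] [DecidableEq ι]

theorem Matrix.IsHermitian.trace_mul_self_eq_sum_sq_eigenvalues {𝕜 : Type*} [RCLike 𝕜]
    {A : Matrix ι ι 𝕜} (hA : A.IsHermitian) : (A * A).trace = ∑ i, (hA.eigenvalues i : 𝕜) ^ 2 := by
  conv_lhs => rw [hA.spectral_theorem, ← map_mul, Unitary.conjStarAlgAut_apply, trace_mul_cycle,
    Unitary.coe_star_mul_self, one_mul, diagonal_mul_diagonal, trace_diagonal]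
  simp [sq]

theorem Matrix.IsHermitian.trace_sq_le_rank_mul_trace_mul_self {A : Matrix ι ι ℝ}
    (hA : A.IsHermitian) : A.trace ^ 2 ≤ A.rank * (A * A).trace := by
  let S := univ.filter fun i => hA.eigenvalues i ≠ 0
  have hrank : A.rank = #S := by rw [hA.rank_eq_card_non_zero_eigs, Fintype.card_subtype]
  have htrace : A.trace = ∑ i ∈ S, hA.eigenvalues i := by
    rw [hA.trace_eq_sum_eigenvalues, sum_filter_ne_zero]; rfl
  have htrace_sq : (A * A).trace = ∑ i ∈ S, hA.eigenvalues i ^ 2 := by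
    rw [hA.trace_mul_self_eq_sum_sq_eigenvalues, sum_filter_of_ne fun i _ hi => ?_]
    · rfl
    · exact pow_ne_zero_iff two_ne_zero |>.mp hi
  rw [hrank, htrace, htrace_sq]
  exact sq_sum_le_card_mul_sum_sq

theorem Matrix.IsSymm.card_le_rank_mul_of_diag_eq_one {A : Matrix ι ι ℝ} (hA : A.IsSymm)
    (hdiag : ∀ i, A i i = 1) {ε : ℝ} (hoff : ∀ i j, i ≠ j → |A i j| ≤ ε) :
    (Fintype.card ι : ℝ) ≤ A.rank * (1 + Fintype.card ι * ε ^ 2) := by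
  have hentry : ∀ i j, A i j ^ 2 ≤ (if i = j then 1 else 0) + ε ^ 2 := by
    intro i j
    by_cases hij : i = j
    · simpa [hij, hdiag] using sq_nonneg ε
    · simpa [hij, sq_abs] using pow_le_pow_left₀ (abs_nonneg _) (hoff i j hij) 2
  have htrace : A.trace = Fintype.card ι := by simp [trace, hdiag]
  have htrace_sq : (A * A).trace ≤ Fintype.card ι * (1 + Fintype.card ι * ε ^ 2) := by
    calc (A * A).trace = ∑ i, ∑ j, A i j ^ 2 := by
          simp only [trace, diag, mul_apply, sq, hA.apply]
      _ ≤ ∑ i : ι, ∑ j : ι, ((if i = j then 1 else 0) + ε ^ 2) := by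
          gcongr with i _ j
          exact hentry i j
      _ = Fintype.card ι * (1 + Fintype.card ι * ε ^ 2) := by
          simp only [sum_add_distrib, sum_ite_eq, mem_univ, ↓reduceIte, sum_const, card_univ,
            nsmul_eq_mul]
          ring
  have hcs := (isHermitian_iff_isSymm.mpr hA).trace_sq_le_rank_mul_trace_mul_self
  rw [htrace] at hcs
  rcases (Fintype.card ι).eq_zero_or_pos with hι | hι
  · simp [hι]
  have hι : (0 : ℝ) < Fintype.card ι := by exact_mod_cast hι
  nlinarith [mul_le_mul_of_nonneg_left htrace_sq (Nat.cast_nonneg (α := ℝ) A.rank)]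

theorem approx_equilateral_lk_general (k : ℕ) (hk : 2 ≤ k) (hke : Even k)
    (n : ℕ) (m : ℕ) (P : Fin m → (Fin n → ℝ))
    (h : ∀ i j : Fin m, i ≠ j →
      |1 - ∑ t, |P i t - P j t| ^ k| ≤ (m : ℝ) ^ (-(1 / 2) : ℝ)) :
    m ≤ 2 * ((k - 1) * n + 2) := by
  set M : Matrix (Fin m) (Fin m) ℝ := of fun i j => 1 - ∑ t, (P i t - P j t) ^ k
  have hsymm : M.IsSymm := IsSymm.ext fun i j => by
    simp only [M, of_apply, ← neg_sub (P i _), hke.neg_pow]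
  have hdiag : ∀ i, M i i = 1 := fun i => by simp [M, zero_pow (by omega : k ≠ 0)]
  have hoff : ∀ i j, i ≠ j → |M i j| ≤ (m : ℝ) ^ (-(1 / 2) : ℝ) := fun i j hij => by
    simpa [M, hke.pow_abs] using h i j hij
  have hrank : M.rank ≤ (k - 1) * n + 2 :=
    (rank_one_sub_sum_sub_pow_le P (by omega)).trans_eq (by rw [Fintype.card_fin, mul_comm])
  have halon := hsymm.card_le_rank_mul_of_diag_eq_one hdiag hoff
  rcases m.eq_zero_or_pos with rfl | hm
  · omega
  have hε : (m : ℝ) * ((m : ℝ) ^ (-(1 / 2) : ℝ)) ^ 2 = 1 := by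
    rw [← Real.rpow_natCast, ← Real.rpow_mul (by positivity)]
    norm_num [Real.rpow_neg_one, hm.ne']
  rw [Fintype.card_fin, hε] at halon
  calc m ≤ 2 * M.rank := by exact_mod_cast (by linarith : (m : ℝ) ≤ 2 * M.rank)
    _ ≤ 2 * ((k - 1) * n + 2) := by omega

theorem approx_equilateral_lk (k : ℕ) (hk : 2 ≤ k) (hke : Even k)
    (n : ℕ) (hn : 0 < n) (m : ℕ) (P : Fin m → (Fin n → ℝ))
    (h : ∀ i j : Fin m, i ≠ j →
      |1 - ∑ t, |P i t - P j t| ^ k| ≤ (m : ℝ) ^ (-(1 / 2) : ℝ)) :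
    m ≤ 2 * ((k - 1) * n + 2) :=
  approx_equilateral_lk_general k hk hke n m P h
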